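/- arXiv:1602.05761 — 2 statements merged into one kernel-verified Lean document; each statement's English description precedes it below -/
import Mathlib

section
/- Assume g : ℝ^d → ℝ^{d×p} is continuous, U ⊂ C([0,T],ℝ^{d−r}) is compact under ‖·‖∞, U_n ⊆ U are nonempty compact subsets, m is continuous on [0,T], and ‖m̂_n − m‖∞ → 0 in probability. Then: sup_{u∈U_n} ‖Â_u − A_u‖ = o_P(1), sup_{u∈U_n} ‖A_u‖ = O(1), sup_{u∈U_n} ‖Â_u‖ = O_P(1); and sup_{u∈U_n} ‖B̂_u − B_u‖ = o_P(1), sup_{u∈U_n} ‖B_u‖ = O(1), sup_{u∈U_n} ‖B̂_u‖ = O_P(1). -/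
open MeasureTheory Filter
open scoped Matrix

attribute [local instance] Matrix.frobeniusSeminormedAddCommGroup
  Matrix.frobeniusNormedAddCommGroup Matrix.frobeniusNormedSpace

noncomputable section

namespace ODEC

/-- sup over `[0,T]` of the norm of `f`. -/
def supN {E : Type*} [SeminormedAddCommGroup E] (T : ℝ) (f : ℝ → E) : ℝ :=
  ⨆ t : Set.Icc (0:ℝ) T, ‖f t‖

/-- extension of a continuous function on `[0,T]` to `ℝ`. -/
def ext {T : ℝ} (hT : 0 ≤ T) {E : Type*} [TopologicalSpace E]
    (f : C(Set.Icc (0:ℝ) T, E)) : ℝ → E :=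
  fun t => f (Set.projIcc 0 T hT t)

/-- combining measured and unmeasured components into one vector function -/
def pair {r q : ℕ} (m : ℝ → EuclideanSpace ℝ (Fin r)) (u : ℝ → EuclideanSpace ℝ (Fin q)) :
    ℝ → EuclideanSpace ℝ (Fin (r + q)) :=
  fun t => (EuclideanSpace.equiv (Fin (r + q)) ℝ).symm
    (Fin.append (EuclideanSpace.equiv (Fin r) ℝ (m t)) (EuclideanSpace.equiv (Fin q) ℝ (u t)))

def measPart {r q : ℕ} (x : ℝ → EuclideanSpace ℝ (Fin (r + q))) : ℝ → EuclideanSpace ℝ (Fin r) :=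
  fun t => (EuclideanSpace.equiv (Fin r) ℝ).symm fun i => x t (Fin.castAdd q i)

def unmeasPart {r q : ℕ} (x : ℝ → EuclideanSpace ℝ (Fin (r + q))) : ℝ → EuclideanSpace ℝ (Fin q) :=
  fun t => (EuclideanSpace.equiv (Fin q) ℝ).symm fun i => x t (Fin.natAdd r i)

/-- matrix-vector multiplication between Euclidean spaces -/
def mv {a b : ℕ} (A : Matrix (Fin a) (Fin b) ℝ) (v : EuclideanSpace ℝ (Fin b)) :
    EuclideanSpace ℝ (Fin a) :=
  Matrix.toEuclideanLin A v

variable {n p : ℕ}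

def Gm (g : EuclideanSpace ℝ (Fin n) → Matrix (Fin n) (Fin p) ℝ)
    (x : ℝ → EuclideanSpace ℝ (Fin n)) (t : ℝ) : Matrix (Fin n) (Fin p) ℝ :=
  ∫ s in (0:ℝ)..t, g (x s)

def Am (g : EuclideanSpace ℝ (Fin n) → Matrix (Fin n) (Fin p) ℝ)
    (x : ℝ → EuclideanSpace ℝ (Fin n)) (T : ℝ) : Matrix (Fin n) (Fin p) ℝ :=
  ∫ t in (0:ℝ)..T, Gm g x t

def Bm (g : EuclideanSpace ℝ (Fin n) → Matrix (Fin n) (Fin p) ℝ)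
    (x : ℝ → EuclideanSpace ℝ (Fin n)) (T : ℝ) : Matrix (Fin p) (Fin p) ℝ :=
  ∫ t in (0:ℝ)..T, (Gm g x t)ᵀ * Gm g x t

/-- the matrix `T·I_d − A B⁻¹ Aᵀ`. -/
def Cm (g : EuclideanSpace ℝ (Fin n) → Matrix (Fin n) (Fin p) ℝ)
    (x : ℝ → EuclideanSpace ℝ (Fin n)) (T : ℝ) : Matrix (Fin n) (Fin n) ℝ :=
  T • (1 : Matrix (Fin n) (Fin n) ℝ) - Am g x T * (Bm g x T)⁻¹ * (Am g x T)ᵀ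

def xiv (g : EuclideanSpace ℝ (Fin n) → Matrix (Fin n) (Fin p) ℝ)
    (x : ℝ → EuclideanSpace ℝ (Fin n)) (T : ℝ) : EuclideanSpace ℝ (Fin n) :=
  mv (Cm g x T)⁻¹
    (∫ t in (0:ℝ)..T, mv (1 - Am g x T * (Bm g x T)⁻¹ * (Gm g x t)ᵀ) (x t))

def thv (g : EuclideanSpace ℝ (Fin n) → Matrix (Fin n) (Fin p) ℝ)
    (x : ℝ → EuclideanSpace ℝ (Fin n)) (T : ℝ) : EuclideanSpace ℝ (Fin p) :=
  mv (Bm g x T)⁻¹ (∫ t in (0:ℝ)..T, mv (Gm g x t)ᵀ (x t - xiv g x T))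

def Mf (g : EuclideanSpace ℝ (Fin n) → Matrix (Fin n) (Fin p) ℝ)
    (x : ℝ → EuclideanSpace ℝ (Fin n)) (T : ℝ) : ℝ :=
  ∫ t in (0:ℝ)..T, ‖x t - xiv g x T - mv (Gm g x t) (thv g x T)‖ ^ 2

/-- `x` solves the integral equation `x(t) = ξ + (∫₀ᵗ g(x(s)) ds)·θ` on `[0,T]`. -/
def IsSol (g : EuclideanSpace ℝ (Fin n) → Matrix (Fin n) (Fin p) ℝ) (T : ℝ)
    (θ : EuclideanSpace ℝ (Fin p)) (ξ : EuclideanSpace ℝ (Fin n))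
    (x : ℝ → EuclideanSpace ℝ (Fin n)) : Prop :=
  ContinuousOn x (Set.Icc 0 T) ∧ ∀ t ∈ Set.Icc (0:ℝ) T, x t = ξ + mv (Gm g x t) θ

end ODEC

open ODEC

/-! The trajectory `x_u` depends continuously on `(m, u)` in the uniform topology, and `G_u`,
`A_u`, `B_u` are parametric integrals of continuous integrands, so `(m, u) ↦ A_u, B_u` is jointly
continuous. Since `U` is compact, this continuity in `m` is uniform in `u ∈ U`, and `A_u, B_u`
are bounded on `U` at the true `m`. Hence `m̂_n → m` in probability transfers to the suprema over
`U_n ⊆ U`, and boundedness plus consistency gives the `O_P(1)` bounds. -/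

namespace ODEC

open Function

section Trajectory

variable {n p : ℕ} {g : EuclideanSpace ℝ (Fin n) → Matrix (Fin n) (Fin p) ℝ}

lemma Gm_congr {x y : ℝ → EuclideanSpace ℝ (Fin n)} {T t : ℝ}
    (hxy : Set.EqOn x y (Set.Icc 0 T)) (ht : t ∈ Set.Icc 0 T) : Gm g x t = Gm g y t :=
  intervalIntegral.integral_congr fun s hs => by
    rw [Set.uIcc_of_le ht.1] at hs
    exact congrArg g (hxy ⟨hs.1, hs.2.trans ht.2⟩)

lemma Am_congr {x y : ℝ → EuclideanSpace ℝ (Fin n)} {T : ℝ} (hT : 0 ≤ T)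
    (hxy : Set.EqOn x y (Set.Icc 0 T)) : Am g x T = Am g y T :=
  intervalIntegral.integral_congr fun _ ht => Gm_congr hxy (Set.uIcc_of_le hT ▸ ht)

lemma Bm_congr {x y : ℝ → EuclideanSpace ℝ (Fin n)} {T : ℝ} (hT : 0 ≤ T)
    (hxy : Set.EqOn x y (Set.Icc 0 T)) : Bm g x T = Bm g y T :=
  intervalIntegral.integral_congr fun _ ht => by
    simp only [Gm_congr hxy (Set.uIcc_of_le hT ▸ ht)]

variable {X : Type*} [TopologicalSpace X] {x : X → ℝ → EuclideanSpace ℝ (Fin n)}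

lemma continuous_Gm (hg : Continuous g) (hx : Continuous (uncurry x)) :
    Continuous fun z : X × ℝ => Gm g (x z.1) z.2 :=
  intervalIntegral.continuous_parametric_primitive_of_continuous (f := fun a s => g (x a s))
    (hg.comp hx)

lemma continuous_Am (hg : Continuous g) (hx : Continuous (uncurry x)) (T : ℝ) :
    Continuous fun a => Am g (x a) T :=
  intervalIntegral.continuous_parametric_intervalIntegral_of_continuous' (continuous_Gm hg hx) 0 T

lemma continuous_Bm (hg : Continuous g) (hx : Continuous (uncurry x)) (T : ℝ) :
    Continuous fun a => Bm g (x a) T :=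
  intervalIntegral.continuous_parametric_intervalIntegral_of_continuous'
    ((continuous_Gm hg hx).matrix_transpose.matrix_mul (continuous_Gm hg hx)) 0 T

end Trajectory

lemma continuous_pair {r q : ℕ} {X : Type*} [TopologicalSpace X]
    {a : X → ℝ → EuclideanSpace ℝ (Fin r)} {b : X → ℝ → EuclideanSpace ℝ (Fin q)}
    (ha : Continuous (uncurry a)) (hb : Continuous (uncurry b)) :
    Continuous (uncurry fun z => pair (a z) (b z)) := by
  refine (PiLp.continuous_toLp 2 _).comp (continuous_pi fun i => ?_)
  refine Fin.addCases (fun i => ?_) (fun i => ?_) i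
  · simp only [Fin.append_left]
    exact (continuous_apply i).comp ((PiLp.continuous_ofLp 2 _).comp ha)
  · simp only [Fin.append_right]
    exact (continuous_apply i).comp ((PiLp.continuous_ofLp 2 _).comp hb)

lemma continuous_ext {T : ℝ} (hT : 0 ≤ T) {E : Type*} [TopologicalSpace E] :
    Continuous (uncurry fun f : C(Set.Icc (0:ℝ) T, E) => ext hT f) :=
  continuous_eval.comp
    (continuous_fst.prodMk ((continuous_projIcc (h := hT)).comp continuous_snd))

end ODEC

open Function Topology

lemma IsCompact.eventually_forall_dist_lt {X Y F : Type*} [TopologicalSpace X]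
    [TopologicalSpace Y] [PseudoMetricSpace F] {Ψ : X → Y → F} (hΨ : Continuous (uncurry Ψ))
    {K : Set Y} (hK : IsCompact K) (x₀ : X) {ε : ℝ} (hε : 0 < ε) :
    ∀ᶠ x in 𝓝 x₀, ∀ y ∈ K, dist (Ψ x y) (Ψ x₀ y) < ε := by
  obtain ⟨v, hv, hvK⟩ := hK.mem_uniformity_of_prod hΨ.continuousOn (Set.mem_univ x₀)
    (Metric.dist_mem_uniformity hε)
  rw [nhdsWithin_univ] at hv
  exact Filter.mem_of_superset hv fun x hx y hy => hvK x hx y hy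

lemma ContinuousMap.tendstoInMeasure_of_exists_le_norm_sub {Ω ι α E : Type*}
    [MeasurableSpace Ω] {P : Measure Ω} {l : Filter ι} [TopologicalSpace α] [CompactSpace α]
    [SeminormedAddCommGroup E] {f : ι → Ω → C(α, E)} {f₀ : C(α, E)}
    (h : ∀ ε > 0, Tendsto (fun i => P {ω | ∃ t, ε ≤ ‖f i ω t - f₀ t‖}) l (𝓝 0)) :
    TendstoInMeasure P f l fun _ => f₀ := by
  refine tendstoInMeasure_iff_dist.2 fun ε hε => tendsto_of_tendsto_of_tendsto_of_le_of_le
    tendsto_const_nhds (h ε hε) (fun _ => zero_le) fun i => measure_mono fun ω hω => ?_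
  by_contra hlt
  simp only [Set.mem_ofPred_eq, not_exists, not_le, ← dist_eq_norm] at hlt
  exact (Set.mem_ofPred_eq ▸ hω).not_gt ((ContinuousMap.dist_lt_iff hε).2 hlt)

lemma MeasureTheory.TendstoInMeasure.tendsto_measure_notMem {Ω ι X : Type*}
    [MeasurableSpace Ω] {P : Measure Ω} {l : Filter ι} [PseudoMetricSpace X] {Z : ι → Ω → X}
    {x₀ : X} (hZ : TendstoInMeasure P Z l fun _ => x₀) {V : Set X} (hV : V ∈ 𝓝 x₀) :
    Tendsto (fun i => P {ω | Z i ω ∉ V}) l (𝓝 0) := by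
  obtain ⟨δ, hδ, hball⟩ := Metric.mem_nhds_iff.1 hV
  refine tendsto_of_tendsto_of_tendsto_of_le_of_le tendsto_const_nhds
    (tendstoInMeasure_iff_dist.1 hZ δ hδ) (fun _ => zero_le) fun i => measure_mono fun ω hω => ?_
  by_contra hlt
  exact hω (hball (Metric.mem_ball.2 (not_le.1 hlt)))

section UniformConsistency

variable {Ω ι X Y F : Type*} [MeasurableSpace Ω] {P : Measure Ω} {l : Filter ι}
  [SeminormedAddCommGroup F]

lemma eventually_measure_exists_le_norm_lt {Un : ι → Set Y} {Ψ : ι → Ω → Y → F} {Ψ₀ : Y → F}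
    {C : ℝ} (hC : ∀ i, ∀ u ∈ Un i, ‖Ψ₀ u‖ ≤ C)
    (hΨ : Tendsto (fun i => P {ω | ∃ u ∈ Un i, 1 ≤ ‖Ψ i ω u - Ψ₀ u‖}) l (𝓝 0))
    {δ : ℝ} (hδ : 0 < δ) :
    ∀ᶠ i in l, P {ω | ∃ u ∈ Un i, C + 1 ≤ ‖Ψ i ω u‖} < ENNReal.ofReal δ := by
  filter_upwards [hΨ.eventually_lt_const (ENNReal.ofReal_pos.2 hδ)] with i hi
  refine lt_of_le_of_lt (measure_mono fun ω ⟨u, hu, hle⟩ => ?_) hi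
  refine ⟨u, hu, ?_⟩
  linarith [hC i u hu, norm_sub_norm_le (Ψ i ω u) (Ψ₀ u)]

variable [PseudoMetricSpace X] [TopologicalSpace Y]

lemma tendsto_measure_exists_le_norm_sub_of_continuous {Ψ : X → Y → F}
    (hΨ : Continuous (uncurry Ψ)) {U : Set Y} (hU : IsCompact U) {Un : ι → Set Y}
    (hUn : ∀ i, Un i ⊆ U) {Z : ι → Ω → X} {x₀ : X} (hZ : TendstoInMeasure P Z l fun _ => x₀)
    {ε : ℝ} (hε : 0 < ε) :
    Tendsto (fun i => P {ω | ∃ u ∈ Un i, ε ≤ ‖Ψ (Z i ω) u - Ψ x₀ u‖}) l (𝓝 0) :=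
  tendsto_of_tendsto_of_tendsto_of_le_of_le tendsto_const_nhds
    (hZ.tendsto_measure_notMem (hU.eventually_forall_dist_lt hΨ x₀ hε)) (fun _ => zero_le)
    fun i => measure_mono fun _ ⟨u, hu, hle⟩ hclose =>
      (hclose u (hUn i hu)).not_ge (dist_eq_norm (Ψ _ u) (Ψ x₀ u) ▸ hle)

theorem uniform_consistency_of_continuous {Ψ : X → Y → F} (hΨ : Continuous (uncurry Ψ))
    {U : Set Y} (hU : IsCompact U) {Un : ι → Set Y} (hUn : ∀ i, Un i ⊆ U)
    {Z : ι → Ω → X} {x₀ : X} (hZ : TendstoInMeasure P Z l fun _ => x₀) :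
    (∀ ε > (0:ℝ), Tendsto (fun i => P {ω | ∃ u ∈ Un i, ε ≤ ‖Ψ (Z i ω) u - Ψ x₀ u‖}) l (𝓝 0)) ∧
    (∃ C : ℝ, ∀ i, ∀ u ∈ Un i, ‖Ψ x₀ u‖ ≤ C) ∧
    (∀ δ > (0:ℝ), ∃ C : ℝ, ∀ᶠ i in l,
      P {ω | ∃ u ∈ Un i, C ≤ ‖Ψ (Z i ω) u‖} < ENNReal.ofReal δ) := by
  obtain ⟨C, hC⟩ :=
    hU.exists_bound_of_continuousOn (hΨ.comp (Continuous.prodMk_right x₀)).continuousOn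
  have hcons := fun ε (hε : 0 < ε) =>
    tendsto_measure_exists_le_norm_sub_of_continuous hΨ hU hUn hZ hε
  have hC' : ∀ i, ∀ u ∈ Un i, ‖Ψ x₀ u‖ ≤ C := fun i u hu => hC u (hUn i hu)
  exact ⟨hcons, ⟨C, hC'⟩,
    fun δ hδ => ⟨C + 1, eventually_measure_exists_le_norm_lt hC' (hcons 1 one_pos) hδ⟩⟩

end UniformConsistency

theorem stmt4_general {Ω : Type*} [MeasurableSpace Ω] (P : MeasureTheory.Measure Ω)
    {r q p : ℕ} {T : ℝ} (hT : 0 < T)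
    (g : EuclideanSpace ℝ (Fin (r + q)) → Matrix (Fin (r + q)) (Fin p) ℝ)
    (hg : Continuous g)
    (U : Set C(Set.Icc (0:ℝ) T, EuclideanSpace ℝ (Fin q)))
    (hU : IsCompact U)
    (Un : ℕ → Set C(Set.Icc (0:ℝ) T, EuclideanSpace ℝ (Fin q)))
    (hUn : ∀ n, Un n ⊆ U)
    (m : ℝ → EuclideanSpace ℝ (Fin r)) (hm : ContinuousOn m (Set.Icc 0 T))
    (mhat : ℕ → Ω → C(Set.Icc (0:ℝ) T, EuclideanSpace ℝ (Fin r)))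
    (hcons : ∀ ε > (0:ℝ), Filter.Tendsto (fun n =>
      P {ω | ∃ t : Set.Icc (0:ℝ) T, ε ≤ ‖mhat n ω t - m ↑t‖}) Filter.atTop (nhds 0)) :
    (∀ ε > (0:ℝ), Filter.Tendsto (fun n =>
      P {ω | ∃ u ∈ Un n,
        ε ≤ ‖Am g (pair (ext hT.le (mhat n ω)) (ext hT.le u)) T
              - Am g (pair m (ext hT.le u)) T‖}) Filter.atTop (nhds 0)) ∧
    (∃ C : ℝ, ∀ n, ∀ u ∈ Un n, ‖Am g (pair m (ext hT.le u)) T‖ ≤ C) ∧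
    (∀ δ > (0:ℝ), ∃ C : ℝ, ∀ᶠ n in Filter.atTop,
      P {ω | ∃ u ∈ Un n,
        C ≤ ‖Am g (pair (ext hT.le (mhat n ω)) (ext hT.le u)) T‖} < ENNReal.ofReal δ) ∧
    (∀ ε > (0:ℝ), Filter.Tendsto (fun n =>
      P {ω | ∃ u ∈ Un n,
        ε ≤ ‖Bm g (pair (ext hT.le (mhat n ω)) (ext hT.le u)) T
              - Bm g (pair m (ext hT.le u)) T‖}) Filter.atTop (nhds 0)) ∧
    (∃ C : ℝ, ∀ n, ∀ u ∈ Un n, ‖Bm g (pair m (ext hT.le u)) T‖ ≤ C) ∧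
    (∀ δ > (0:ℝ), ∃ C : ℝ, ∀ᶠ n in Filter.atTop,
      P {ω | ∃ u ∈ Un n,
        C ≤ ‖Bm g (pair (ext hT.le (mhat n ω)) (ext hT.le u)) T‖} < ENNReal.ofReal δ) := by
  let m₀ : C(Set.Icc (0:ℝ) T, EuclideanSpace ℝ (Fin r)) := ⟨_, hm.domRestrict⟩
  have hmhat : TendstoInMeasure P mhat atTop fun _ => m₀ :=
    ContinuousMap.tendstoInMeasure_of_exists_le_norm_sub hcons
  have hx : Continuous (uncurry fun z : C(Set.Icc (0:ℝ) T, EuclideanSpace ℝ (Fin r)) ×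
      C(Set.Icc (0:ℝ) T, EuclideanSpace ℝ (Fin q)) => pair (ext hT.le z.1) (ext hT.le z.2)) :=
    continuous_pair ((continuous_ext hT.le).comp (continuous_fst.prodMap continuous_id))
      ((continuous_ext hT.le).comp (continuous_snd.prodMap continuous_id))
  have hm₀ : ∀ u : C(Set.Icc (0:ℝ) T, EuclideanSpace ℝ (Fin q)),
      Set.EqOn (pair m (ext hT.le u)) (pair (ext hT.le m₀) (ext hT.le u)) (Set.Icc 0 T) :=
    fun u t ht => by simp [pair, ext, m₀, Set.projIcc_of_mem hT.le ht]
  simp only [Am_congr hT.le (hm₀ _), Bm_congr hT.le (hm₀ _)]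
  obtain ⟨hA, hA₀, hAhat⟩ := uniform_consistency_of_continuous
    (Ψ := fun mh u => Am g (pair (ext hT.le mh) (ext hT.le u)) T) (continuous_Am hg hx T)
    hU hUn hmhat
  obtain ⟨hB, hB₀, hBhat⟩ := uniform_consistency_of_continuous
    (Ψ := fun mh u => Bm g (pair (ext hT.le mh) (ext hT.le u)) T) (continuous_Bm hg hx T)
    hU hUn hmhat
  exact ⟨hA, hA₀, hAhat, hB, hB₀, hBhat⟩

/-- Uniform consistency and boundedness of `Â_u, A_u, B̂_u, B_u`.
(`sup ≥ ε` statements are encoded in existential form; matrices carry the Frobenius norm.) -/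
theorem stmt4 {Ω : Type*} [MeasurableSpace Ω] (P : MeasureTheory.Measure Ω)
    [MeasureTheory.IsProbabilityMeasure P]
    {r q p : ℕ} (hr : 0 < r) (hq : 0 < q) (hp : 0 < p) {T : ℝ} (hT : 0 < T)
    (g : EuclideanSpace ℝ (Fin (r + q)) → Matrix (Fin (r + q)) (Fin p) ℝ)
    (hg : Continuous g)
    (U : Set C(Set.Icc (0:ℝ) T, EuclideanSpace ℝ (Fin q)))
    (hU : IsCompact U)
    (Un : ℕ → Set C(Set.Icc (0:ℝ) T, EuclideanSpace ℝ (Fin q)))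
    (hUn : ∀ n, Un n ⊆ U) (hUne : ∀ n, (Un n).Nonempty) (hUnc : ∀ n, IsCompact (Un n))
    (m : ℝ → EuclideanSpace ℝ (Fin r)) (hm : ContinuousOn m (Set.Icc 0 T))
    (mhat : ℕ → Ω → C(Set.Icc (0:ℝ) T, EuclideanSpace ℝ (Fin r)))
    (hmeas : ∀ n, @Measurable Ω C(Set.Icc (0:ℝ) T, EuclideanSpace ℝ (Fin r)) _
      (borel _) (mhat n))
    (hcons : ∀ ε > (0:ℝ), Filter.Tendsto (fun n =>
      P {ω | ∃ t : Set.Icc (0:ℝ) T, ε ≤ ‖mhat n ω t - m ↑t‖}) Filter.atTop (nhds 0)) :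
    (∀ ε > (0:ℝ), Filter.Tendsto (fun n =>
      P {ω | ∃ u ∈ Un n,
        ε ≤ ‖Am g (pair (ext hT.le (mhat n ω)) (ext hT.le u)) T
              - Am g (pair m (ext hT.le u)) T‖}) Filter.atTop (nhds 0)) ∧
    (∃ C : ℝ, ∀ n, ∀ u ∈ Un n, ‖Am g (pair m (ext hT.le u)) T‖ ≤ C) ∧
    (∀ δ > (0:ℝ), ∃ C : ℝ, ∀ᶠ n in Filter.atTop,
      P {ω | ∃ u ∈ Un n,
        C ≤ ‖Am g (pair (ext hT.le (mhat n ω)) (ext hT.le u)) T‖} < ENNReal.ofReal δ) ∧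
    (∀ ε > (0:ℝ), Filter.Tendsto (fun n =>
      P {ω | ∃ u ∈ Un n,
        ε ≤ ‖Bm g (pair (ext hT.le (mhat n ω)) (ext hT.le u)) T
              - Bm g (pair m (ext hT.le u)) T‖}) Filter.atTop (nhds 0)) ∧
    (∃ C : ℝ, ∀ n, ∀ u ∈ Un n, ‖Bm g (pair m (ext hT.le u)) T‖ ≤ C) ∧
    (∀ δ > (0:ℝ), ∃ C : ℝ, ∀ᶠ n in Filter.atTop,
      P {ω | ∃ u ∈ Un n,
        C ≤ ‖Bm g (pair (ext hT.le (mhat n ω)) (ext hT.le u)) T‖} < ENNReal.ofReal δ) :=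
  stmt4_general P hT g hg U hU Un hUn m hm mhat hcons
end
end

section
/- Let u : [0,T] → ℝ^{d−r} be continuous and suppose B_u and T·I_d − A_u B_u⁻¹ A_uᵀ are invertible, so that ξ_u, θ_u and M(u) are defined. If M(u) = 0, then x_u(t) = ξ_u + G_u(t)·θ_u for every t ∈ [0,T]; in particular x_u is continuously differentiable, x_u(0) = ξ_u, and x_u'(t) = g(x_u(t))·θ_u for all t ∈ [0,T]. -/
open MeasureTheory Filter
open scoped Matrix

attribute [local instance] Matrix.frobeniusSeminormedAddCommGroup
  Matrix.frobeniusNormedAddCommGroup Matrix.frobeniusNormedSpace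

noncomputable section

open ODEC

/-! `M(u)` is the integral over `[0,T]` of the squared norm of the continuous residual
`x_u(t) - ξ_u - G_u(t) θ_u`, so `M(u) = 0` forces the residual to vanish at every point of `[0,T]`.
The fundamental theorem of calculus then differentiates `ξ_u + G_u(t) θ_u`. -/

theorem ContinuousOn.hasDerivWithinAt_integral_Icc {E : Type*} [NormedAddCommGroup E]
    [NormedSpace ℝ E] [CompleteSpace E] {f : ℝ → E} {a b t : ℝ}
    (hf : ContinuousOn f (Set.Icc a b)) (ht : t ∈ Set.Icc a b) :
    HasDerivWithinAt (fun u => ∫ s in a..u, f s) (f t) (Set.Icc a b) t := by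
  have : Fact (t ∈ Set.Icc a b) := ⟨ht⟩
  exact intervalIntegral.integral_hasDerivWithinAt_right
    (hf.mono (Set.uIcc_subset_Icc (Set.left_mem_Icc.mpr (ht.1.trans ht.2)) ht)).intervalIntegrable
    (hf.stronglyMeasurableAtFilter_nhdsWithin measurableSet_Icc t) (hf t ht)

namespace ODEC

variable {n p : ℕ}

theorem continuousOn_pair {r q : ℕ} {m : ℝ → EuclideanSpace ℝ (Fin r)}
    {u : ℝ → EuclideanSpace ℝ (Fin q)} {s : Set ℝ} (hm : ContinuousOn m s)
    (hu : ContinuousOn u s) : ContinuousOn (pair m u) s := by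
  refine (EuclideanSpace.equiv (Fin (r + q)) ℝ).symm.continuous.comp_continuousOn
    (continuousOn_pi.mpr fun i => Fin.addCases (fun j => ?_) (fun j => ?_) i)
  · simp only [Fin.append_left]
    exact (EuclideanSpace.proj j).continuous.comp_continuousOn hm
  · simp only [Fin.append_right]
    exact (EuclideanSpace.proj j).continuous.comp_continuousOn hu

def mvCLM (θ : EuclideanSpace ℝ (Fin p)) :
    Matrix (Fin n) (Fin p) ℝ →L[ℝ] EuclideanSpace ℝ (Fin n) :=
  LinearMap.toContinuousLinearMap
    (LinearMap.applyₗ θ ∘ₗ (Matrix.toEuclideanLin : Matrix (Fin n) (Fin p) ℝ ≃ₗ[ℝ] _).toLinearMap)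

theorem Gm_zero (g : EuclideanSpace ℝ (Fin n) → Matrix (Fin n) (Fin p) ℝ)
    (x : ℝ → EuclideanSpace ℝ (Fin n)) : Gm g x 0 = 0 := by
  simp [Gm]

variable {g : EuclideanSpace ℝ (Fin n) → Matrix (Fin n) (Fin p) ℝ}
  {x : ℝ → EuclideanSpace ℝ (Fin n)} {T t : ℝ}

theorem hasDerivWithinAt_Gm (hg : Continuous g) (hx : ContinuousOn x (Set.Icc 0 T))
    (ht : t ∈ Set.Icc 0 T) : HasDerivWithinAt (Gm g x) (g (x t)) (Set.Icc 0 T) t :=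
  (hg.comp_continuousOn hx).hasDerivWithinAt_integral_Icc ht

theorem continuousOn_Gm (hg : Continuous g) (hx : ContinuousOn x (Set.Icc 0 T)) :
    ContinuousOn (Gm g x) (Set.Icc 0 T) :=
  fun _ ht => (hasDerivWithinAt_Gm hg hx ht).continuousWithinAt

theorem IsSol.apply_zero {θ : EuclideanSpace ℝ (Fin p)} {ξ : EuclideanSpace ℝ (Fin n)}
    (hsol : IsSol g T θ ξ x) (hT : 0 ≤ T) : x 0 = ξ := by
  simpa only [mv, Gm_zero, map_zero, LinearMap.zero_apply, add_zero] using
    hsol.2 0 (Set.left_mem_Icc.mpr hT)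

theorem IsSol.hasDerivWithinAt {θ : EuclideanSpace ℝ (Fin p)} {ξ : EuclideanSpace ℝ (Fin n)}
    (hg : Continuous g) (hsol : IsSol g T θ ξ x) (ht : t ∈ Set.Icc 0 T) :
    HasDerivWithinAt x (mv (g (x t)) θ) (Set.Icc 0 T) t :=
  (((mvCLM θ).hasFDerivAt.comp_hasDerivWithinAt t
    (hasDerivWithinAt_Gm hg hsol.1 ht)).const_add ξ).congr_of_mem hsol.2 ht

theorem isSol_of_Mf_eq_zero (hg : Continuous g) (hx : ContinuousOn x (Set.Icc 0 T))
    (hT : 0 < T) (hM : Mf g x T = 0) : IsSol g T (thv g x T) (xiv g x T) x := by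
  refine ⟨hx, fun t ht => ?_⟩
  set r := fun t => x t - xiv g x T - mv (Gm g x t) (thv g x T)
  have hr : ContinuousOn r (Set.Icc 0 T) :=
    (hx.sub continuousOn_const).sub ((mvCLM _).continuous.comp_continuousOn (continuousOn_Gm hg hx))
  rw [← sub_eq_zero, ← sub_sub]
  by_contra hrt
  have := intervalIntegral.integral_pos hT (hr.norm.pow 2) (fun s _ => sq_nonneg ‖r s‖)
    ⟨t, ht, pow_pos (norm_pos_iff.mpr hrt) 2⟩
  exact this.ne' hM

end ODEC

theorem stmt11_general {r q p : ℕ} {T : ℝ} (hT : 0 < T)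
    (g : EuclideanSpace ℝ (Fin (r + q)) → Matrix (Fin (r + q)) (Fin p) ℝ)
    (hg : Continuous g)
    (m : ℝ → EuclideanSpace ℝ (Fin r)) (hm : ContinuousOn m (Set.Icc 0 T))
    (u : ℝ → EuclideanSpace ℝ (Fin q)) (hu : ContinuousOn u (Set.Icc 0 T))
    (hM0 : Mf g (pair m u) T = 0) :
    (∀ t ∈ Set.Icc (0:ℝ) T,
      pair m u t = xiv g (pair m u) T + mv (Gm g (pair m u) t) (thv g (pair m u) T)) ∧
    pair m u 0 = xiv g (pair m u) T ∧
    (∀ t ∈ Set.Icc (0:ℝ) T,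
      HasDerivWithinAt (pair m u) (mv (g (pair m u t)) (thv g (pair m u) T))
        (Set.Icc 0 T) t) ∧
    ContinuousOn (fun t => mv (g (pair m u t)) (thv g (pair m u) T)) (Set.Icc 0 T) := by
  have hx := continuousOn_pair hm hu
  have hsol := isSol_of_Mf_eq_zero hg hx hT hM0
  exact ⟨hsol.2, hsol.apply_zero hT.le, fun t ht => hsol.hasDerivWithinAt hg ht,
    ((mvCLM _).continuous.comp hg).comp_continuousOn hx⟩

/-- If `M(u) = 0` then `x_u(t) = ξ_u + G_u(t)θ_u` on `[0,T]`; in particular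
`x_u(0) = ξ_u`, `x_u` is differentiable on `[0,T]` with `x_u'(t) = g(x_u(t))θ_u`, and this
derivative is continuous on `[0,T]`. -/
theorem stmt11 {r q p : ℕ} (hr : 0 < r) (hq : 0 < q) (hp : 0 < p) {T : ℝ} (hT : 0 < T)
    (g : EuclideanSpace ℝ (Fin (r + q)) → Matrix (Fin (r + q)) (Fin p) ℝ)
    (hg : Continuous g)
    (m : ℝ → EuclideanSpace ℝ (Fin r)) (hm : ContinuousOn m (Set.Icc 0 T))
    (u : ℝ → EuclideanSpace ℝ (Fin q)) (hu : ContinuousOn u (Set.Icc 0 T))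
    (hBinv : IsUnit (Bm g (pair m u) T)) (hCinv : IsUnit (Cm g (pair m u) T))
    (hM0 : Mf g (pair m u) T = 0) :
    (∀ t ∈ Set.Icc (0:ℝ) T,
      pair m u t = xiv g (pair m u) T + mv (Gm g (pair m u) t) (thv g (pair m u) T)) ∧
    pair m u 0 = xiv g (pair m u) T ∧
    (∀ t ∈ Set.Icc (0:ℝ) T,
      HasDerivWithinAt (pair m u) (mv (g (pair m u t)) (thv g (pair m u) T))
        (Set.Icc 0 T) t) ∧
    ContinuousOn (fun t => mv (g (pair m u t)) (thv g (pair m u) T)) (Set.Icc 0 T) :=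
  stmt11_general hT g hg m hm u hu hM0
end
end
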